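/- For a real number q with 0<q<1, nonnegative integer a, and positive integer n, H_n^*[{2}^a, 1] = ∑_{k=1}^n ((1+q^k)/[k]_q^{2a+1}) · ([n choose k]_q / [n+k choose k]_q) · q^{k^2 + ak}. -/

import Mathlib

open Finset

/-- q-analogue of a natural number: [m]_q = (1-q^m)/(1-q). -/
noncomputable def qnum (q : ℝ) (m : ℕ) : ℝ := (1 - q ^ m) / (1 - q)

/-- q-Pochhammer (q;q)_n = ∏_{k=0}^{n-1} (1 - q^{k+1}). -/
noncomputable def qPoch (q : ℝ) (n : ℕ) : ℝ := ∏ k ∈ Finset.range n, (1 - q ^ (k + 1))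

/-- Gaussian q-binomial coefficient, 0 when m > n. -/
noncomputable def qbinom (q : ℝ) (n m : ℕ) : ℝ :=
  if m ≤ n then qPoch q n / (qPoch q m * qPoch q (n - m)) else 0

/-- q-multiple harmonic star sum H_n^*[s₁,…,s_m]. -/
noncomputable def qHstar (q : ℝ) : List ℕ → ℕ → ℝ
  | [], _ => 1
  | s :: rest, n => ∑ k ∈ Finset.Icc 1 n, q ^ k / qnum q k ^ s * qHstar q rest k

/-- q-multiple zeta star value ζ_q^*[s₁,…,s_m]. -/
noncomputable def qZetaStar (q : ℝ) : List ℕ → ℝ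
  | [] => 1
  | s :: rest => ∑' k : ℕ, q ^ (k + 1) / qnum q (k + 1) ^ s * qHstar q rest (k + 1)

/-- strict multiple harmonic sum ∑_{n ≥ k₁ > … > k_r ≥ 1} ∏ 1/k_j^{p_j}. -/
noncomputable def Hstrict : List ℕ → ℕ → ℝ
  | [], _ => 1
  | p :: rest, n => ∑ k ∈ Finset.Icc 1 n, (1 : ℝ) / (k : ℝ) ^ p * Hstrict rest (k - 1)

/-- binomial-weighted strict multiple harmonic sum Ĥ_n(p). -/
noncomputable def Hhat : List ℕ → ℕ → ℝ
  | [], _ => 1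
  | p :: rest, n => ∑ k ∈ Finset.Icc 1 n,
      ((n.choose k : ℝ) / ((n + k).choose n)) * ((1 : ℝ) / (k : ℝ) ^ p) * Hstrict rest (k - 1)

/-- ordinary multiple harmonic star sum H_n^*(s₁,…,s_m). -/
noncomputable def HstarO : List ℕ → ℕ → ℝ
  | [], _ => 1
  | s :: rest, n => ∑ k ∈ Finset.Icc 1 n, (1 : ℝ) / (k : ℝ) ^ s * HstarO rest k

/-- ordinary multiple zeta star value. -/
noncomputable def zetaStarO : List ℕ → ℝ
  | [] => 1
  | s :: rest => ∑' k : ℕ, (1 : ℝ) / ((k : ℝ) + 1) ^ s * HstarO rest (k + 1)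

/-- Merge a list of parts according to a comma(true)/plus(false) pattern. -/
def mergeComp : ℕ → List ℕ → List Bool → List ℕ
  | a, [], _ => [a]
  | a, _ :: _, [] => [a]
  | a, b :: t, true :: bs => a :: mergeComp b t bs
  | a, b :: t, false :: bs => mergeComp (a + b) t bs

/-! Write `w k = q^k/[k]^2` and `B(n,k) = [n choose k]/[n+k choose k]`, so that the right-hand
side is `S_{a+1}(n)` with `S_b(n) = ∑_{k=1}^n (1+q^k) [k] q^{k(k-1)} w_k^b B(n,k)`. Both
`H_n^*[{2}^a,1]` and `S_{a+1}(n)` vanish at `n = 0` and satisfy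
`X_a(n+1) = X_a(n) + w_{n+1} X_{a-1}(n+1)`, where `X_{-1}(n) = [n]` on the harmonic side
(as `q^n/[n] = w_n [n]`) and `X_{-1}(n) = S_0(n)` on the other. For the sums the recurrence is
`(w_k - w_{n+1}) B(n+1,k) = w_k B(n,k)`, which comes down to
`(1-q^{n+1})^2 - (1-q^{n+1-k})(1-q^{n+1+k}) = q^{n+1-k}(1-q^k)^2`; and `S_0(n) = [n]` telescopes
with `u_k = q^{k(k-1)} (1-q^{n+k}) B(n,k)`. -/

noncomputable def qbinomRatio (q : ℝ) (n k : ℕ) : ℝ := qbinom q n k / qbinom q (n + k) k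

noncomputable def qWeight (q : ℝ) (k : ℕ) : ℝ := q ^ k / qnum q k ^ 2

noncomputable def weightedQbinomSum (q : ℝ) (a n : ℕ) : ℝ :=
  ∑ k ∈ Icc 1 n,
    (1 + q ^ k) * qnum q k * q ^ (k * (k - 1)) * qWeight q k ^ a * qbinomRatio q n k

section
variable {q : ℝ}

lemma one_sub_pow_ne_zero_of_abs_lt (hq : |q| < 1) {m : ℕ} (hm : m ≠ 0) : 1 - q ^ m ≠ 0 := by
  refine sub_ne_zero.2 fun h => ?_
  have : |q| ^ m < 1 := pow_lt_one₀ (abs_nonneg q) hq hm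
  rw [← abs_pow, ← h, abs_one] at this
  exact this.false

lemma one_sub_ne_zero_of_abs_lt (hq : |q| < 1) : 1 - q ≠ 0 := by
  simpa using one_sub_pow_ne_zero_of_abs_lt hq one_ne_zero

lemma qnum_ne_zero (hq : |q| < 1) {m : ℕ} (hm : m ≠ 0) : qnum q m ≠ 0 :=
  div_ne_zero (one_sub_pow_ne_zero_of_abs_lt hq hm) (one_sub_ne_zero_of_abs_lt hq)

lemma qPoch_succ (n : ℕ) : qPoch q (n + 1) = qPoch q n * (1 - q ^ (n + 1)) :=
  prod_range_succ _ _

lemma qPoch_ne_zero (hq : |q| < 1) (n : ℕ) : qPoch q n ≠ 0 :=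
  prod_ne_zero_iff.2 fun _ _ => one_sub_pow_ne_zero_of_abs_lt hq (Nat.succ_ne_zero _)

lemma qbinomRatio_of_le (hq : |q| < 1) {n k : ℕ} (hk : k ≤ n) :
    qbinomRatio q n k = qPoch q n ^ 2 / (qPoch q (n - k) * qPoch q (n + k)) := by
  have hP := qPoch_ne_zero hq
  rw [qbinomRatio, qbinom, qbinom, if_pos hk, if_pos (by omega), Nat.add_sub_cancel]
  field_simp [hP k, hP (n - k), hP (n + k)]

lemma qbinomRatio_of_lt {n k : ℕ} (hk : n < k) : qbinomRatio q n k = 0 := by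
  rw [qbinomRatio, qbinom, if_neg (by omega), zero_div]

lemma qbinomRatio_succ_right_mul (hq : |q| < 1) (n k : ℕ) :
    qbinomRatio q n (k + 1) * (1 - q ^ (n + k + 1)) =
      qbinomRatio q n k * (1 - q ^ (n - k)) := by
  rcases lt_or_ge n (k + 1) with hnk | hkn
  · rw [qbinomRatio_of_lt hnk, zero_mul]
    rcases Nat.lt_succ_iff_lt_or_eq.1 hnk with hnk | rfl
    · rw [qbinomRatio_of_lt (by omega), zero_mul]
    · rw [Nat.sub_self, pow_zero, sub_self, mul_zero]
  · obtain ⟨m, rfl⟩ : ∃ m, n = k + 1 + m := ⟨n - (k + 1), by omega⟩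
    have hP := qPoch_ne_zero hq
    rw [qbinomRatio_of_le hq hkn, qbinomRatio_of_le hq (by omega),
      show k + 1 + m - (k + 1) = m by omega, show k + 1 + m - k = m + 1 by omega,
      show k + 1 + m + (k + 1) = k + 1 + m + k + 1 by omega, qPoch_succ m,
      qPoch_succ (k + 1 + m + k)]
    field_simp [one_sub_pow_ne_zero_of_abs_lt hq (Nat.succ_ne_zero _)]

lemma qbinomRatio_zero_right (hq : |q| < 1) (n : ℕ) : qbinomRatio q n 0 = 1 := by
  rw [qbinomRatio_of_le hq n.zero_le, Nat.sub_zero, Nat.add_zero, sq,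
    div_self (mul_ne_zero (qPoch_ne_zero hq n) (qPoch_ne_zero hq n))]

lemma qbinomRatio_succ_left_mul (hq : |q| < 1) {n k : ℕ} (hk : k ≤ n) :
    qbinomRatio q (n + 1) k * ((1 - q ^ (n + 1 - k)) * (1 - q ^ (n + 1 + k))) =
      qbinomRatio q n k * (1 - q ^ (n + 1)) ^ 2 := by
  have hP := qPoch_ne_zero hq
  rw [qbinomRatio_of_le hq hk, qbinomRatio_of_le hq (by omega), Nat.sub_add_comm hk,
    add_right_comm, qPoch_succ n, qPoch_succ (n - k), qPoch_succ (n + k)]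
  field_simp [hP n, hP (n - k), hP (n + k),
    one_sub_pow_ne_zero_of_abs_lt hq (Nat.succ_ne_zero (n - k)),
    one_sub_pow_ne_zero_of_abs_lt hq (Nat.succ_ne_zero (n + k))]

lemma qWeight_sub_mul_qbinomRatio_succ (hq : |q| < 1) {n k : ℕ} (hk : 1 ≤ k) :
    (qWeight q k - qWeight q (n + 1)) * qbinomRatio q (n + 1) k =
      qWeight q k * qbinomRatio q n k := by
  rcases le_or_gt k n with hkn | hnk
  · have h := qbinomRatio_succ_left_mul hq hkn
    obtain ⟨m, rfl⟩ : ∃ m, n = k + m := ⟨n - k, by omega⟩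
    have e1 : q ^ (k + m + 1) = q ^ k * q ^ (m + 1) := by rw [← pow_add]; ring_nf
    have e2 : q ^ (k + m + 1 + k) = q ^ k * q ^ k * q ^ (m + 1) := by
      rw [← pow_add, ← pow_add]; ring_nf
    rw [show k + m + 1 - k = m + 1 by omega, e1, e2] at h
    have hx := one_sub_pow_ne_zero_of_abs_lt hq (m := k) (by omega)
    have hxy := one_sub_pow_ne_zero_of_abs_lt hq (m := k + m + 1) (by omega)
    have h1 := one_sub_ne_zero_of_abs_lt hq
    rw [e1] at hxy
    simp only [qWeight, qnum, e1]
    field_simp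
    linear_combination q ^ k * h
  · rw [qbinomRatio_of_lt hnk, mul_zero]
    rcases (Nat.succ_le_of_lt hnk).eq_or_lt with rfl | hnk
    · rw [sub_self, zero_mul]
    · rw [qbinomRatio_of_lt hnk, mul_zero]

lemma weightedQbinomSum_zero (hq : |q| < 1) (n : ℕ) : weightedQbinomSum q 0 n = qnum q n := by
  set u : ℕ → ℝ := fun k => q ^ (k * (k - 1)) * (1 - q ^ (n + k)) * qbinomRatio q n k
  have h1q := one_sub_ne_zero_of_abs_lt hq
  have hstep : ∀ k ∈ Icc 1 n, (1 + q ^ k) * qnum q k * q ^ (k * (k - 1)) * qWeight q k ^ 0 *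
      qbinomRatio q n k = (u k - u (k + 1)) / (1 - q) := by
    intro k hk
    obtain ⟨hk1, hkn⟩ := mem_Icc.1 hk
    have hsucc : q ^ ((k + 1) * (k + 1 - 1)) = q ^ (k * (k - 1)) * q ^ k * q ^ k := by
      rw [← pow_add, ← pow_add]
      obtain ⟨j, rfl⟩ : ∃ j, k = j + 1 := ⟨k - 1, by omega⟩
      simp only [Nat.add_sub_cancel]
      ring_nf
    have hpow : q ^ (n + k) = q ^ k * q ^ k * q ^ (n - k) := by
      rw [← pow_add, ← pow_add]; congr 1; omega
    have h := qbinomRatio_succ_right_mul hq n k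
    simp only [u, ← add_assoc, hsucc, qnum]
    rw [mul_assoc _ (1 - q ^ (n + k + 1)), mul_comm (1 - q ^ (n + k + 1)), h, hpow]
    field_simp
    ring
  have htel : ∑ k ∈ Icc 1 n, (u k - u (k + 1)) = u 1 - u (n + 1) := by
    rw [← Ico_add_one_right_eq_Icc, ← neg_sub, ← sum_Ico_sub u (by omega : 1 ≤ n + 1),
      ← sum_neg_distrib]
    simp only [neg_sub]
  have hu1 : u 1 = 1 - q ^ n := by
    have h := qbinomRatio_succ_right_mul hq n 0
    simp only [u, Nat.sub_self, mul_zero, pow_zero, one_mul, add_zero, Nat.sub_zero,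
      qbinomRatio_zero_right hq] at h ⊢
    rw [mul_comm, h]
  have hun : u (n + 1) = 0 := by
    simp only [u, qbinomRatio_of_lt (Nat.lt_succ_self n), mul_zero]
  rw [weightedQbinomSum, sum_congr rfl hstep, ← sum_div, htel, hu1, hun, sub_zero, qnum]

lemma weightedQbinomSum_succ (hq : |q| < 1) (a n : ℕ) :
    weightedQbinomSum q (a + 1) (n + 1) =
      weightedQbinomSum q (a + 1) n + qWeight q (n + 1) * weightedQbinomSum q a (n + 1) := by
  have hextend : weightedQbinomSum q (a + 1) n = ∑ k ∈ Icc 1 (n + 1),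
      (1 + q ^ k) * qnum q k * q ^ (k * (k - 1)) * qWeight q k ^ (a + 1) * qbinomRatio q n k := by
    rw [sum_Icc_succ_top (by omega), qbinomRatio_of_lt (Nat.lt_succ_self n), mul_zero, add_zero,
      weightedQbinomSum]
  rw [hextend, weightedQbinomSum, weightedQbinomSum, mul_sum, ← sum_add_distrib]
  refine sum_congr rfl fun k hk => ?_
  have h := qWeight_sub_mul_qbinomRatio_succ hq (n := n) (mem_Icc.1 hk).1
  linear_combination (1 + q ^ k) * qnum q k * q ^ (k * (k - 1)) * qWeight q k ^ a * h

lemma weightedQbinomSum_succ_eq_sum (hq : |q| < 1) (a n : ℕ) :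
    weightedQbinomSum q (a + 1) n = ∑ k ∈ Icc 1 n,
      (1 + q ^ k) / qnum q k ^ (2 * a + 1) * qbinomRatio q n k * q ^ (k ^ 2 + a * k) := by
  refine sum_congr rfl fun k hk => ?_
  obtain ⟨j, rfl⟩ : ∃ j, k = j + 1 := ⟨k - 1, by have := (mem_Icc.1 hk).1; omega⟩
  have hQ := qnum_ne_zero hq j.succ_ne_zero
  rw [show (j + 1) ^ 2 + a * (j + 1) = (j + 1) * (j + 1 - 1) + (j + 1) * (a + 1) by
      simp only [Nat.add_sub_cancel]; ring,
    pow_add, qWeight, div_pow, ← pow_mul, ← pow_mul]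
  field_simp
  ring

lemma qHstar_cons_succ (s : ℕ) (l : List ℕ) (n : ℕ) :
    qHstar q (s :: l) (n + 1) =
      qHstar q (s :: l) n + q ^ (n + 1) / qnum q (n + 1) ^ s * qHstar q l (n + 1) :=
  sum_Icc_succ_top (by omega) _

lemma qHstar_replicate_two_append_one (hq : |q| < 1) (a n : ℕ) :
    qHstar q (List.replicate a 2 ++ [1]) n = weightedQbinomSum q (a + 1) n := by
  induction a generalizing n with
  | zero =>
    induction n with
    | zero => rfl
    | succ n ih =>
      have hQ := qnum_ne_zero hq n.succ_ne_zero
      rw [List.replicate_zero, List.nil_append] at ih ⊢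
      rw [qHstar_cons_succ, ih, weightedQbinomSum_succ hq, weightedQbinomSum_zero hq, qWeight]
      simp only [qHstar]
      field_simp
  | succ a iha =>
    induction n with
    | zero => rfl
    | succ n ih =>
      rw [List.replicate_succ, List.cons_append] at ih ⊢
      rw [qHstar_cons_succ, ih, iha, weightedQbinomSum_succ hq (a + 1), qWeight]

end

theorem stmt6_general (q : ℝ) (hq0 : 0 < q) (hq1 : q < 1) (a n : ℕ) :
    qHstar q (List.replicate a 2 ++ [1]) n
    = ∑ k ∈ Finset.Icc 1 n,
        (1 + q ^ k) / qnum q k ^ (2 * a + 1) * (qbinom q n k / qbinom q (n + k) k) *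
          q ^ (k ^ 2 + a * k) := by
  have hq : |q| < 1 := abs_lt.2 ⟨by linarith, hq1⟩
  rw [qHstar_replicate_two_append_one hq, weightedQbinomSum_succ_eq_sum hq]
  rfl

theorem stmt6 (q : ℝ) (hq0 : 0 < q) (hq1 : q < 1) (a n : ℕ) (hn : 1 ≤ n) :
    qHstar q (List.replicate a 2 ++ [1]) n
    = ∑ k ∈ Finset.Icc 1 n,
        (1 + q ^ k) / qnum q k ^ (2 * a + 1) * (qbinom q n k / qbinom q (n + k) k) *
          q ^ (k ^ 2 + a * k) :=
  stmt6_general q hq0 hq1 a n
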